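/- Let X and Y be finite nonempty index sets, m : X → ℕ⁺ and n : Y → ℕ⁺, and consider the multi-matrix algebras 𝒜 = ⊕_{x∈X} M_{m_x}(ℂ) and ℬ = ⊕_{y∈Y} M_{n_y}(ℂ). Let F : ℬ → 𝒜 be a unital linear map each of whose components F_{xy} : M_{n_y}(ℂ) → M_{m_x}(ℂ), F_{xy}(B) := (F(ι_y B))_x (where ι_y B is the element of ℬ equal to B in the y-th block and 0 elsewhere), is completely positive. Let ω = Σ_{x} p_x tr(ρ_x ·) be a faithful state on 𝒜 (p_x > 0 a probability distribution, each ρ_x a positive definite density matrix) and suppose the pulled-back state ω∘F equals Σ_{y} q_y tr(σ_y ·) with q_y > 0 and each σ_y a positive definite density matrix. Then the following are equivalent: (a) F_{xy}(σ_y B)ρ_x = ρ_x F_{xy}(B σ_y) for all B ∈ M_{n_y}(ℂ) and all x ∈ X, y ∈ Y; (b) F_{xy}(σ_y^{it} B σ_y^{-it}) = ρ_x^{it} F_{xy}(B) ρ_x^{-it} for all B, all x, y, and all t ∈ ℝ (i.e., F intertwines the modular groups of ω∘F and ω). -/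

import Mathlib

/-!
Diagonalize `ρ = U diag(λ) U*` and `σ = V diag(μ) V*`. Then `ρ^{it}` and `σ^{it}` are diagonal in
the same bases, so after conjugating by `U` and `V` both conditions become conditions on the
individual coefficients `c` of the map in the matrix-unit bases: (a) reads `μⱼ λᵢ' c = λᵢ μⱼ' c`,
and (b) reads `(μⱼ / μⱼ')^{it} c = (λᵢ / λᵢ')^{it} c` for all real `t`. These agree since the
characters `x ↦ x^{it}` separate positive reals.
-/

open Matrix ComplexOrder

/-- The `k`-th amplification `id_{M_k(ℂ)} ⊗ Φ` of a map `Φ` between matrix algebras. -/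
def amplify {n m : Type*} (Φ : Matrix n n ℂ → Matrix m m ℂ) (k : ℕ)
    (M : Matrix (Fin k × n) (Fin k × n) ℂ) : Matrix (Fin k × m) (Fin k × m) ℂ :=
  Matrix.of fun p q => Φ (Matrix.of fun a b => M (p.1, a) (q.1, b)) p.2 q.2

/-- Complete positivity: all amplifications preserve positive semidefiniteness. -/
def IsCP {n m : Type*} [Fintype n] [Fintype m] (Φ : Matrix n n ℂ → Matrix m m ℂ) : Prop :=
  ∀ (k : ℕ) (M : Matrix (Fin k × n) (Fin k × n) ℂ), M.PosSemidef → (amplify Φ k M).PosSemidef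

/-- `ρ^{it} := exp(i t · log ρ)` for a positive definite matrix `ρ`, where `log` is given
by the functional calculus for Hermitian matrices. -/
noncomputable def imagPow {d : Type*} [Fintype d] [DecidableEq d]
    {ρ : Matrix d d ℂ} (hρ : ρ.PosDef) (t : ℝ) : Matrix d d ℂ :=
  NormedSpace.exp ((Complex.I * (t : ℂ)) • (hρ.isHermitian.cfc Real.log))

section
variable {R : Type*} [CommSemiring R] {a b : Type*} [Fintype a] [DecidableEq a] [Fintype b]
  [DecidableEq b]

theorem diagonal_mul_single_mul_diagonal (d d' : b → R) (j j' : b) (c : R) :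
    diagonal d * single j j' c * diagonal d' = single j j' (d j * c * d' j') := by
  ext k l
  by_cases hk : j = k <;> by_cases hl : j' = l <;> simp [hk, hl, eq_comm]

theorem diagonal_mul_mul_diagonal_apply (e e' : a → R) (M : Matrix a a R) (i i' : a) :
    (diagonal e * M * diagonal e') i i' = e i * M i i' * e' i' := by
  simp [diagonal_mul, mul_diagonal]

theorem linearMap_ext_iff_single {M : Type*} [AddCommMonoid M] [Module R M]
    {f g : Matrix a b R →ₗ[R] M} : f = g ↔ ∀ i j, f (single i j 1) = g (single i j 1) :=
  ⟨by rintro rfl; simp, fun h => (stdBasis R a b).ext fun ⟨i, j⟩ => by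
    rw [stdBasis_eq_single]; exact h i j⟩

theorem forall_diagonal_sandwich_iff (h : Matrix b b R →ₗ[R] Matrix a a R)
    (d₁ d₂ d₃ d₄ : b → R) (e₁ e₂ e₃ e₄ : a → R) :
    (∀ C, diagonal e₁ * h (diagonal d₁ * C * diagonal d₂) * diagonal e₂
        = diagonal e₃ * h (diagonal d₃ * C * diagonal d₄) * diagonal e₄) ↔
      ∀ j j' i i', e₁ i * d₁ j * d₂ j' * e₂ i' * h (single j j' 1) i i'
        = e₃ i * d₃ j * d₄ j' * e₄ i' * h (single j j' 1) i i' := by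
  let side (e e' : a → R) (d d' : b → R) : Matrix b b R →ₗ[R] Matrix a a R :=
    LinearMap.mulLeftRight R (diagonal e, diagonal e') ∘ₗ h ∘ₗ
      LinearMap.mulLeftRight R (diagonal d, diagonal d')
  have side_single (e e' : a → R) (d d' : b → R) (j j' : b) (i i' : a) :
      side e e' d d' (single j j' 1) i i' = e i * d j * d' j' * e' i' * h (single j j' 1) i i' := by
    simp only [side, LinearMap.comp_apply, LinearMap.mulLeftRight_apply,
      diagonal_mul_single_mul_diagonal, diagonal_mul_mul_diagonal_apply, mul_one]
    rw [show single j j' (d j * d' j') = (d j * d' j') • single j j' (1 : R) by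
      rw [Matrix.smul_single, smul_eq_mul, mul_one], map_smul]
    simp only [Matrix.smul_apply, smul_eq_mul]; ring
  calc _ ↔ side e₁ e₂ d₁ d₂ = side e₃ e₄ d₃ d₄ := LinearMap.ext_iff.symm
    _ ↔ _ := by
      rw [linearMap_ext_iff_single]
      simp only [← Matrix.ext_iff, side_single]

end

theorem forall_algEquiv_sandwich_iff {R A₀ A A₀' A' : Type*} [CommSemiring R] [Semiring A₀]
    [Semiring A] [Semiring A₀'] [Semiring A'] [Algebra R A₀] [Algebra R A] [Algebra R A₀']
    [Algebra R A'] (φ : A₀ ≃ₐ[R] A) (ψ : A₀' ≃ₐ[R] A') (g : A →ₗ[R] A')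
    (d₁ d₂ d₃ d₄ : A₀) (e₁ e₂ e₃ e₄ : A₀') :
    (∀ B, ψ e₁ * g (φ d₁ * B * φ d₂) * ψ e₂ = ψ e₃ * g (φ d₃ * B * φ d₄) * ψ e₄) ↔
      ∀ C, e₁ * (ψ.symm.toLinearMap ∘ₗ g ∘ₗ φ.toLinearMap) (d₁ * C * d₂) * e₂
        = e₃ * (ψ.symm.toLinearMap ∘ₗ g ∘ₗ φ.toLinearMap) (d₃ * C * d₄) * e₄ := by
  refine φ.surjective.forall.trans (forall_congr' fun C => ?_)
  rw [← ψ.symm.injective.eq_iff]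
  simp [map_mul]

theorem forall_exp_I_mul_eq_iff {a b : ℝ} :
    (∀ t : ℝ, Complex.exp (Complex.I * t * a) = Complex.exp (Complex.I * t * b)) ↔ a = b := by
  refine ⟨fun h => ?_, by rintro rfl _; rfl⟩
  by_contra hab
  have hab' : ((a : ℂ) - b) ≠ 0 := by exact_mod_cast sub_ne_zero.mpr hab
  set t : ℝ := Real.pi / (a - b)
  have key : Complex.exp (Complex.I * t * a - Complex.I * t * b) = 1 := by
    rw [Complex.exp_sub, h t, div_self (Complex.exp_ne_zero _)]
  have ht : Complex.I * t * a - Complex.I * t * b = Real.pi * Complex.I := by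
    simp only [t]; push_cast; field_simp
  rw [ht, Complex.exp_pi_mul_I] at key
  norm_num at key

theorem mul_mul_eq_iff_forall_exp_mul_I {μ μ' l l' : ℝ} (hμ : 0 < μ) (hμ' : 0 < μ')
    (hl : 0 < l) (hl' : 0 < l') (c : ℂ) :
    (μ : ℂ) * l' * c = l * μ' * c ↔ ∀ t : ℝ,
      Complex.exp (Complex.I * t * Real.log μ) *
          Complex.exp (Complex.I * (-t : ℝ) * Real.log μ') * c
        = Complex.exp (Complex.I * t * Real.log l) *
          Complex.exp (Complex.I * (-t : ℝ) * Real.log l') * c := by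
  rcases eq_or_ne c 0 with rfl | hc
  · simp
  have hexp (x y t : ℝ) :
      Complex.exp (Complex.I * t * Real.log x) * Complex.exp (Complex.I * (-t : ℝ) * Real.log y)
        = Complex.exp (Complex.I * t * (Real.log x - Real.log y : ℝ)) := by
    rw [← Complex.exp_add]; push_cast; ring_nf
  simp only [mul_left_inj' hc, hexp, forall_exp_I_mul_eq_iff]
  rw [sub_eq_sub_iff_add_eq_add, ← Real.log_mul hμ.ne' hl'.ne', ← Real.log_mul hl.ne' hμ'.ne',
    Real.log_injOn_pos.eq_iff (mul_pos hμ hl') (mul_pos hl hμ')]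
  exact_mod_cast Iff.rfl

theorem imagPow_eq_conj {d : Type*} [Fintype d] [DecidableEq d] {ρ : Matrix d d ℂ}
    (hρ : ρ.PosDef) (t : ℝ) :
    imagPow hρ t = Unitary.conjStarAlgAut ℂ _ hρ.isHermitian.eigenvectorUnitary
      (diagonal fun i =>
        Complex.exp (Complex.I * t * Real.log (hρ.isHermitian.eigenvalues i))) := by
  rw [imagPow, IsHermitian.cfc, ← map_smul, Unitary.conjStarAlgAut_apply,
    Unitary.conjStarAlgAut_apply]
  refine (Matrix.exp_units_conj (Unitary.toUnits hρ.isHermitian.eigenvectorUnitary) _).trans ?_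
  rw [← diagonal_smul, exp_diagonal, Pi.exp_def]
  simp [Complex.exp_eq_exp_ℂ]

theorem forall_map_mul_comm_iff_forall_imagPow_conj {a b : Type*} [Fintype a] [DecidableEq a]
    [Fintype b] [DecidableEq b]
    (g : Matrix b b ℂ →ₗ[ℂ] Matrix a a ℂ) {ρ : Matrix a a ℂ} {σ : Matrix b b ℂ}
    (hρ : ρ.PosDef) (hσ : σ.PosDef) :
    (∀ B, g (σ * B) * ρ = ρ * g (B * σ)) ↔
      ∀ B (t : ℝ), g (imagPow hσ t * B * imagPow hσ (-t))
        = imagPow hρ t * g B * imagPow hρ (-t) := by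
  set φ := (Unitary.conjStarAlgAut ℂ _ hσ.isHermitian.eigenvectorUnitary).toAlgEquiv
  set ψ := (Unitary.conjStarAlgAut ℂ _ hρ.isHermitian.eigenvectorUnitary).toAlgEquiv
  set h := ψ.symm.toLinearMap ∘ₗ g ∘ₗ φ.toLinearMap
  set μ := hσ.isHermitian.eigenvalues
  set l := hρ.isHermitian.eigenvalues
  have hσφ : φ (diagonal (RCLike.ofReal ∘ μ)) = σ := hσ.isHermitian.spectral_theorem.symm
  have hρψ : ψ (diagonal (RCLike.ofReal ∘ l)) = ρ := hρ.isHermitian.spectral_theorem.symm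
  have hσt (t : ℝ) :
      φ (diagonal fun j => Complex.exp (Complex.I * t * Real.log (μ j))) = imagPow hσ t :=
    (imagPow_eq_conj hσ t).symm
  have hρt (t : ℝ) :
      ψ (diagonal fun i => Complex.exp (Complex.I * t * Real.log (l i))) = imagPow hρ t :=
    (imagPow_eq_conj hρ t).symm
  have ha := (forall_algEquiv_sandwich_iff φ ψ g (diagonal (RCLike.ofReal ∘ μ)) (diagonal 1)
    (diagonal 1) (diagonal (RCLike.ofReal ∘ μ)) (diagonal 1) (diagonal (RCLike.ofReal ∘ l))
    (diagonal (RCLike.ofReal ∘ l)) (diagonal 1)).trans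
    (forall_diagonal_sandwich_iff h _ _ _ _ _ _ _ _)
  simp only [Pi.one_def, diagonal_one, map_one, mul_one, one_mul, hσφ, hρψ,
    Function.comp_apply] at ha
  have hb (t : ℝ) := (forall_algEquiv_sandwich_iff φ ψ g
    (diagonal fun j => Complex.exp (Complex.I * t * Real.log (μ j)))
    (diagonal fun j => Complex.exp (Complex.I * (-t : ℝ) * Real.log (μ j)))
    (diagonal 1) (diagonal 1) (diagonal 1) (diagonal 1)
    (diagonal fun i => Complex.exp (Complex.I * t * Real.log (l i)))
    (diagonal fun i => Complex.exp (Complex.I * (-t : ℝ) * Real.log (l i)))).trans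
    (forall_diagonal_sandwich_iff h _ _ _ _ _ _ _ _)
  simp only [Pi.one_def, diagonal_one, map_one, mul_one, one_mul, hσt, hρt] at hb
  rw [ha, @forall_comm (Matrix b b ℂ) ℝ, forall_congr' hb]
  have hμ := hσ.eigenvalues_pos
  have hl := hρ.eigenvalues_pos
  exact ⟨fun H t j j' i i' => (mul_mul_eq_iff_forall_exp_mul_I (hμ j) (hμ j') (hl i) (hl i') _).1
      (H j j' i i') t,
    fun H j j' i i' => (mul_mul_eq_iff_forall_exp_mul_I (hμ j) (hμ j') (hl i) (hl i') _).2
      fun t => H t j j' i i'⟩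

theorem stmt_9_general {X Y : Type*} [DecidableEq Y]
    (m : X → ℕ) (n : Y → ℕ)
    (F : ((y : Y) → Matrix (Fin (n y)) (Fin (n y)) ℂ) →ₗ[ℂ]
         ((x : X) → Matrix (Fin (m x)) (Fin (m x)) ℂ))
    (ρ : (x : X) → Matrix (Fin (m x)) (Fin (m x)) ℂ)
    (hρ : ∀ x, (ρ x).PosDef)
    (σ : (y : Y) → Matrix (Fin (n y)) (Fin (n y)) ℂ)
    (hσd : ∀ y, (σ y).PosDef) :
    (∀ (x : X) (y : Y) (B : Matrix (Fin (n y)) (Fin (n y)) ℂ),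
        F (Pi.single y (σ y * B)) x * ρ x = ρ x * F (Pi.single y (B * σ y)) x) ↔
    (∀ (x : X) (y : Y) (B : Matrix (Fin (n y)) (Fin (n y)) ℂ) (t : ℝ),
        F (Pi.single y (imagPow (hσd y) t * B * imagPow (hσd y) (-t))) x
          = imagPow (hρ x) t * F (Pi.single y B) x * imagPow (hρ x) (-t)) :=
  forall_congr' fun x => forall_congr' fun y =>
    forall_map_mul_comm_iff_forall_imagPow_conj
      (LinearMap.proj x ∘ₗ F ∘ₗ LinearMap.single ℂ (fun y => Matrix (Fin (n y)) (Fin (n y)) ℂ) y)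
      (hρ x) (hσd y)

/-- For a unital blockwise-CP map `F` between multi-matrix algebras and
faithful states `ω = Σ_x p_x tr(ρ_x ·)` on the codomain pulling back to
`Σ_y q_y tr(σ_y ·)`, the blockwise condition `F_{xy}(σ_y B)ρ_x = ρ_x F_{xy}(B σ_y)` holds
iff `F` intertwines the modular groups blockwise:
`F_{xy}(σ_y^{it} B σ_y^{-it}) = ρ_x^{it} F_{xy}(B) ρ_x^{-it}`. -/
theorem stmt_9 {X Y : Type*} [Fintype X] [Fintype Y] [DecidableEq X] [DecidableEq Y]
    [Nonempty X] [Nonempty Y]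
    (m : X → ℕ) (n : Y → ℕ) (hm : ∀ x, 0 < m x) (hn : ∀ y, 0 < n y)
    (F : ((y : Y) → Matrix (Fin (n y)) (Fin (n y)) ℂ) →ₗ[ℂ]
         ((x : X) → Matrix (Fin (m x)) (Fin (m x)) ℂ))
    (hFunital : F 1 = 1)
    (hFcp : ∀ (x : X) (y : Y), IsCP (fun B => F (Pi.single y B) x))
    (p : X → ℝ) (hp : ∀ x, 0 < p x) (hpsum : ∑ x, p x = 1)
    (ρ : (x : X) → Matrix (Fin (m x)) (Fin (m x)) ℂ)
    (hρ : ∀ x, (ρ x).PosDef) (hρtr : ∀ x, (ρ x).trace = 1)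
    (q : Y → ℝ) (hq : ∀ y, 0 < q y) (hqsum : ∑ y, q y = 1)
    (σ : (y : Y) → Matrix (Fin (n y)) (Fin (n y)) ℂ)
    (hσd : ∀ y, (σ y).PosDef) (hσtr : ∀ y, (σ y).trace = 1)
    (hpull : ∀ B : (y : Y) → Matrix (Fin (n y)) (Fin (n y)) ℂ,
      ∑ x, (p x : ℂ) * (ρ x * F B x).trace = ∑ y, (q y : ℂ) * (σ y * B y).trace) :
    (∀ (x : X) (y : Y) (B : Matrix (Fin (n y)) (Fin (n y)) ℂ),
        F (Pi.single y (σ y * B)) x * ρ x = ρ x * F (Pi.single y (B * σ y)) x) ↔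
    (∀ (x : X) (y : Y) (B : Matrix (Fin (n y)) (Fin (n y)) ℂ) (t : ℝ),
        F (Pi.single y (imagPow (hσd y) t * B * imagPow (hσd y) (-t))) x
          = imagPow (hρ x) t * F (Pi.single y B) x * imagPow (hρ x) (-t)) :=
  stmt_9_general m n F ρ hρ σ hσd
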